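/- arXiv:2306.16679 — 2 statements merged into one kernel-verified Lean document; each statement's English description precedes it below -/
import Mathlib

section
/- Let d ∈ ℕ with d ≥ 1. For each n ∈ ℕ let A_n be a unital C*-algebra with a faithful state φ_n, and let A_∞ be a unital C*-algebra with a faithful state φ_∞. For each n ∈ ℕ ∪ {∞} let X^(n) be a d-tuple of elements of the corresponding algebra. Assume the uniform RD property (there exist C > 0, D > 0 with ‖P(X^(n))‖ ≤ C·(deg P + 1)^D·(φ_n(P(X^(n))* P(X^(n))))^{1/2} for all n ∈ ℕ and all *-polynomials P) and convergence in non-commutative *-distribution (φ_n(P(X^(n))) → φ_∞(P(X^(∞))) for every *-polynomial P). Then for every self-adjoint *-polynomial P (one satisfying P* = P, so that P(X^(n)) is self-adjoint for every n), the spectra converge in Hausdorff distance: hausdorffDist(σ(P(X^(n))), σ(P(X^(∞)))) → 0 as n → ∞, where σ denotes the spectrum as a compact subset of ℝ. -/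
open Filter ComplexOrder

/-- A state on a unital C*-algebra: a linear functional which is unital and positive. -/
def IsState {A : Type*} [CStarAlgebra A] (φ : A →ₗ[ℂ] ℂ) : Prop :=
  φ 1 = 1 ∧ ∀ x : A, 0 ≤ φ (star x * x)

/-- A state is faithful if `φ (x* x) = 0` implies `x = 0`. -/
def IsFaithful {A : Type*} [CStarAlgebra A] (φ : A →ₗ[ℂ] ℂ) : Prop :=
  ∀ x : A, φ (star x * x) = 0 → x = 0

/-- Evaluation of a word in the letters `X_1,…,X_d, X_1*,…,X_d*` (the Boolean flag
indicates a starred letter) at a `d`-tuple of elements of a C*-algebra. -/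
def evalWord {d : ℕ} {A : Type*} [Ring A] [StarRing A] (x : Fin d → A)
    (w : List (Fin d × Bool)) : A :=
  (w.map fun p => if p.2 then star (x p.1) else x p.1).prod

/-- A *-polynomial in `d` variables is a finitely supported ℂ-linear combination of words;
this is its evaluation at a `d`-tuple. -/
noncomputable def evalPoly {d : ℕ} {A : Type*} [Ring A] [StarRing A] [Algebra ℂ A]
    (P : List (Fin d × Bool) →₀ ℂ) (x : Fin d → A) : A :=
  P.sum fun w c => c • evalWord x w

/-- The degree of a *-polynomial: the maximal length of a word with nonzero coefficient. -/
def degPoly {d : ℕ} (P : List (Fin d × Bool) →₀ ℂ) : ℕ :=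
  P.support.sup List.length

/-- The formal adjoint of a word: reverse the word and flip all stars. -/
def starWord {d : ℕ} (w : List (Fin d × Bool)) : List (Fin d × Bool) :=
  (w.map fun p => (p.1, !p.2)).reverse

/-- A *-polynomial is self-adjoint if `P* = P`, i.e. the coefficient of the adjoint of each
word is the complex conjugate of the coefficient of the word. -/
def IsSelfAdjointPoly {d : ℕ} (P : List (Fin d × Bool) →₀ ℂ) : Prop :=
  ∀ w : List (Fin d × Bool), P (starWord w) = starRingEnd ℂ (P w)

open Polynomial Metric Set Topology

/-!
Put `a n = P(X n)` and `b = P(Y)`. Convergence in *-distribution gives `φ n (q (a n)) → ψ (q b)`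
for real polynomials `q`, and RD applied to the *-polynomial `q(P) ^ m`, of degree at most
`m * deg q(P)`, bounds `‖q (a n)‖ ^ m = ‖q (a n) ^ m‖` by `C (m K + 1) ^ D φ n (q (a n) ^ 2m) ^ ½`.
The polynomial factor is beaten by `2 ^ m`, so `‖q (a n)‖` is eventually at most twice
`sup_{σ b} |q|`. Choosing `q` uniformly close to a function vanishing on `σ b` and equal to `1` at
distance `ε` from it shows that `σ (a n)` eventually lies in the `ε`-neighbourhood of `σ b`.
Conversely, RD also bounds `‖a n‖` uniformly, so by Weierstrass `φ n (f (a n)) → ψ (f b)` for every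
continuous `f`; for a bump `f = g²` at a point of `σ b`, faithfulness of `ψ` makes the limit
positive, which forces `σ (a n)` to meet the bump.
-/
section FreeAlgebra

variable {d : ℕ} {A : Type*} [Ring A] [StarRing A] [Algebra ℂ A]

/-- The free monoid algebra on the letters is the free algebra, and its `coeff` is a
*-polynomial in the sense of `evalPoly`. -/
noncomputable def evalPolyAlgHom (x : Fin d → A) :
    MonoidAlgebra ℂ (FreeMonoid (Fin d × Bool)) →ₐ[ℂ] A :=
  MonoidAlgebra.lift ℂ A _ (FreeMonoid.lift fun p => if p.2 then star (x p.1) else x p.1)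

lemma evalPolyAlgHom_apply (x : Fin d → A) (Q : MonoidAlgebra ℂ (FreeMonoid (Fin d × Bool))) :
    evalPolyAlgHom x Q = evalPoly Q.coeff x := by
  rw [evalPolyAlgHom, MonoidAlgebra.lift_apply]
  exact Finsupp.sum_congr fun w _ => congrArg _ (FreeMonoid.lift_ofList _ w)

lemma evalPoly_coeff_aeval (x : Fin d → A) (Q : MonoidAlgebra ℂ (FreeMonoid (Fin d × Bool)))
    (q : ℝ[X]) : evalPoly (aeval Q q).coeff x = aeval (evalPoly Q.coeff x) q := by
  rw [← evalPolyAlgHom_apply, ← evalPolyAlgHom_apply]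
  exact (aeval_algHom_apply ((evalPolyAlgHom x).restrictScalars ℝ) Q q).symm

lemma degPoly_coeff_mul_le (Q R : MonoidAlgebra ℂ (FreeMonoid (Fin d × Bool))) :
    degPoly (Q * R).coeff ≤ degPoly Q.coeff + degPoly R.coeff := by
  classical
  refine Finset.sup_le fun w hw => ?_
  obtain ⟨u, hu, v, hv, rfl⟩ := Finset.mem_mul.mp (MonoidAlgebra.support_coeff_mul_subset Q R hw)
  exact (List.length_append ..).trans_le (add_le_add (Finset.le_sup hu) (Finset.le_sup hv))

lemma degPoly_coeff_pow_le (Q : MonoidAlgebra ℂ (FreeMonoid (Fin d × Bool))) (m : ℕ) :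
    degPoly (Q ^ m).coeff ≤ m * degPoly Q.coeff := by
  induction m with
  | zero =>
    rw [pow_zero, zero_mul, Nat.le_zero]
    simp only [degPoly, MonoidAlgebra.support_coeff_one]
    rfl
  | succ m ih =>
    rw [pow_succ, add_one_mul]
    exact (degPoly_coeff_mul_le _ _).trans (by omega)

end FreeAlgebra

section Words

variable {d : ℕ} {A : Type*} [Ring A] [StarRing A]

lemma evalWord_append (x : Fin d → A) (u v : List (Fin d × Bool)) :
    evalWord x (u ++ v) = evalWord x u * evalWord x v := by
  simp [evalWord]

lemma star_evalWord (x : Fin d → A) (w : List (Fin d × Bool)) :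
    star (evalWord x w) = evalWord x (starWord w) := by
  induction w with
  | nil => simp [evalWord, starWord]
  | cons p w ih =>
    obtain ⟨i, b⟩ := p
    have hstar : starWord ((i, b) :: w) = starWord w ++ [(i, !b)] := by simp [starWord]
    rw [hstar, evalWord_append, ← ih]
    cases b <;> simp [evalWord]

end Words

lemma starWord_starWord {d : ℕ} (w : List (Fin d × Bool)) : starWord (starWord w) = w := by
  simp [starWord, Function.comp_def]

lemma isSelfAdjoint_evalPoly {d : ℕ} {A : Type*} [Ring A] [StarRing A] [Algebra ℂ A]
    [StarModule ℂ A] (x : Fin d → A) {P : List (Fin d × Bool) →₀ ℂ}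
    (hP : IsSelfAdjointPoly P) : IsSelfAdjoint (evalPoly P x) := by
  rw [IsSelfAdjoint, evalPoly, Finsupp.sum, star_sum]
  refine Finset.sum_nbij' starWord starWord (fun w hw => ?_) (fun w hw => ?_)
    (fun w _ => starWord_starWord w) (fun w _ => starWord_starWord w) fun w _ => ?_
  · simpa [Finsupp.mem_support_iff, hP w] using hw
  · have h := hP (starWord w)
    rw [starWord_starWord] at h
    simpa [Finsupp.mem_support_iff, h] using hw
  · rw [star_smul, star_evalWord, hP w]
    rfl

lemma IsSelfAdjoint.aeval {A : Type*} [CStarAlgebra A] {a : A} (ha : IsSelfAdjoint a)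
    (q : ℝ[X]) : IsSelfAdjoint (aeval a q) :=
  cfc_polynomial q a ha ▸ cfc_predicate _ a

lemma norm_aeval_evalPoly_pow_le {d : ℕ} {E : Type*} [CStarAlgebra E] {φ : E →ₗ[ℂ] ℂ}
    {x : Fin d → E} {C D : ℝ} (hC : 0 ≤ C) (hD : 0 ≤ D)
    (hRD : ∀ P : List (Fin d × Bool) →₀ ℂ, ‖evalPoly P x‖ ≤
      C * ((degPoly P : ℝ) + 1) ^ D * √((φ (star (evalPoly P x) * evalPoly P x)).re))
    {P : List (Fin d × Bool) →₀ ℂ} (hP : IsSelfAdjoint (evalPoly P x)) (q : ℝ[X]) (m : ℕ) :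
    ‖aeval (evalPoly P x) q ^ m‖ ≤
      C * ((m * degPoly (aeval (.ofCoeff P : MonoidAlgebra ℂ (FreeMonoid (Fin d × Bool))) q).coeff
        + 1 : ℕ) : ℝ) ^ D * √((φ (aeval (evalPoly P x) (q ^ (2 * m)))).re) := by
  set Q := aeval (.ofCoeff P : MonoidAlgebra ℂ (FreeMonoid (Fin d × Bool))) q
  have heval : evalPoly (Q ^ m).coeff x = aeval (evalPoly P x) q ^ m := by
    rw [← evalPolyAlgHom_apply, map_pow, evalPolyAlgHom_apply, evalPoly_coeff_aeval]
  have hsq : star (aeval (evalPoly P x) q ^ m) * aeval (evalPoly P x) q ^ m =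
      aeval (evalPoly P x) (q ^ (2 * m)) := by
    rw [((hP.aeval q).pow m).star_eq, ← pow_add, ← two_mul, map_pow]
  have hdeg : ((degPoly (Q ^ m).coeff : ℝ) + 1) ≤ ((m * degPoly Q.coeff + 1 : ℕ) : ℝ) := by
    exact_mod_cast Nat.add_le_add_right (degPoly_coeff_pow_le Q m) 1
  calc ‖aeval (evalPoly P x) q ^ m‖
      ≤ C * ((degPoly (Q ^ m).coeff : ℝ) + 1) ^ D *
          √((φ (aeval (evalPoly P x) (q ^ (2 * m)))).re) := by
        simpa only [heval, hsq] using hRD (Q ^ m).coeff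
    _ ≤ _ := by gcongr

section State

variable {A : Type*} [CStarAlgebra A] {φ : A →ₗ[ℂ] ℂ}

lemma IsState.nontrivial (hφ : IsState φ) : Nontrivial A :=
  ⟨0, 1, fun h => by simpa [← h] using hφ.1⟩

lemma IsState.re_cfc_nonneg (hφ : IsState φ) {a : A} {f : ℝ → ℝ}
    (hf : Continuous f) (hf0 : ∀ t ∈ spectrum ℝ a, 0 ≤ f t) : 0 ≤ (φ (cfc f a)).re := by
  have hsqrt : Continuous fun t => √(f t) := Real.continuous_sqrt.comp hf
  have hsa : IsSelfAdjoint (cfc (fun t => √(f t)) a) := cfc_predicate _ a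
  have hsq : cfc f a = star (cfc (fun t => √(f t)) a) * cfc (fun t => √(f t)) a := by
    rw [hsa.star_eq, ← cfc_mul _ _ a hsqrt.continuousOn hsqrt.continuousOn]
    exact cfc_congr fun t ht => (Real.mul_self_sqrt (hf0 t ht)).symm
  rw [hsq]
  exact (Complex.le_def.mp (hφ.2 _)).1

lemma IsState.re_cfc_mono (hφ : IsState φ) {a : A} {f g : ℝ → ℝ}
    (hf : Continuous f) (hg : Continuous g) (hfg : ∀ t ∈ spectrum ℝ a, f t ≤ g t) :
    (φ (cfc f a)).re ≤ (φ (cfc g a)).re := by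
  have h := hφ.re_cfc_nonneg (f := fun t => g t - f t) (hg.sub hf) fun t ht =>
    sub_nonneg.mpr (hfg t ht)
  rwa [cfc_sub g f a hg.continuousOn hf.continuousOn, map_sub, Complex.sub_re, sub_nonneg] at h

lemma IsState.re_cfc_const (hφ : IsState φ) {a : A} (ha : IsSelfAdjoint a) (c : ℝ) :
    (φ (cfc (fun _ => c) a)).re = c := by
  rw [cfc_const c a, IsScalarTower.algebraMap_apply ℝ ℂ A, Algebra.algebraMap_eq_smul_one,
    map_smul, hφ.1]
  simp

lemma IsState.re_cfc_le (hφ : IsState φ) {a : A} (ha : IsSelfAdjoint a) {f : ℝ → ℝ}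
    (hf : Continuous f) {c : ℝ} (hfc : ∀ t ∈ spectrum ℝ a, f t ≤ c) : (φ (cfc f a)).re ≤ c :=
  (hφ.re_cfc_mono hf continuous_const hfc).trans_eq (hφ.re_cfc_const ha c)

lemma IsState.le_re_cfc (hφ : IsState φ) {a : A} (ha : IsSelfAdjoint a) {f : ℝ → ℝ}
    (hf : Continuous f) {c : ℝ} (hcf : ∀ t ∈ spectrum ℝ a, c ≤ f t) : c ≤ (φ (cfc f a)).re :=
  (hφ.re_cfc_const ha c).symm.trans_le (hφ.re_cfc_mono continuous_const hf hcf)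

lemma IsState.abs_re_cfc_sub_re_cfc_le (hφ : IsState φ) {a : A} (ha : IsSelfAdjoint a)
    {f g : ℝ → ℝ} (hf : Continuous f) (hg : Continuous g) {δ : ℝ}
    (hfg : ∀ t ∈ spectrum ℝ a, |f t - g t| ≤ δ) :
    |(φ (cfc f a)).re - (φ (cfc g a)).re| ≤ δ := by
  rw [← Complex.sub_re, ← map_sub, ← cfc_sub f g a hf.continuousOn hg.continuousOn, abs_le]
  exact ⟨hφ.le_re_cfc ha (hf.sub hg) fun t ht => (abs_le.mp (hfg t ht)).1,
    hφ.re_cfc_le ha (hf.sub hg) fun t ht => (abs_le.mp (hfg t ht)).2⟩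

lemma IsState.re_pos_of_isFaithful (hφ : IsState φ) (hφf : IsFaithful φ) {x : A} (hx : x ≠ 0) :
    0 < (φ (star x * x)).re := by
  obtain ⟨hre, him⟩ := Complex.le_def.mp (hφ.2 x)
  refine hre.lt_of_ne fun h => hx (hφf x (Complex.ext ?_ ?_))
  exacts [h.symm, him.symm]

end State

lemma eventually_mul_rpow_le_two_pow (c D : ℝ) (K : ℕ) :
    ∀ᶠ m : ℕ in atTop, c * ((m * K + 1 : ℕ) : ℝ) ^ D ≤ 2 ^ m := by
  set k := ⌈D⌉₊
  have hpoly : (fun m : ℕ => c * ((m * K + 1 : ℕ) : ℝ) ^ D) =O[atTop] fun m : ℕ => (m : ℝ) ^ k := by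
    refine Asymptotics.IsBigO.of_bound (|c| * ((K : ℝ) + 1) ^ k) ?_
    filter_upwards [eventually_ge_atTop 1] with m hm
    have hm' : (1 : ℝ) ≤ m := by exact_mod_cast hm
    have hbase : (1 : ℝ) ≤ ((m * K + 1 : ℕ) : ℝ) := by push_cast; nlinarith
    have hlin : ((m * K + 1 : ℕ) : ℝ) ≤ ((K : ℝ) + 1) * m := by push_cast; nlinarith
    calc ‖c * ((m * K + 1 : ℕ) : ℝ) ^ D‖ = |c| * ((m * K + 1 : ℕ) : ℝ) ^ D := by
          rw [norm_mul, Real.norm_eq_abs, Real.norm_of_nonneg (by positivity)]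
      _ ≤ |c| * ((m * K + 1 : ℕ) : ℝ) ^ k := by
          gcongr
          rw [← Real.rpow_natCast]
          exact Real.rpow_le_rpow_of_exponent_le hbase (Nat.le_ceil D)
      _ ≤ |c| * (((K : ℝ) + 1) * m) ^ k := by gcongr
      _ = |c| * ((K : ℝ) + 1) ^ k * ‖(m : ℝ) ^ k‖ := by
          rw [mul_pow, Real.norm_of_nonneg (by positivity)]; ring
  filter_upwards [(hpoly.trans_isLittleO
    (isLittleO_pow_const_const_pow_of_one_lt k one_lt_two)).bound one_pos] with m hm
  rw [one_mul, Real.norm_of_nonneg (by positivity : (0 : ℝ) ≤ 2 ^ m)] at hm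
  exact (Real.le_norm_self _).trans hm

lemma tendsto_hausdorffDist_zero {α ι : Type*} [PseudoMetricSpace α] {l : Filter ι}
    {S : ι → Set α} {K : Set α} (hK : IsCompact K)
    (hSK : ∀ ε > 0, ∀ᶠ i in l, ∀ x ∈ S i, ∃ y ∈ K, dist x y < ε)
    (hKS : ∀ y ∈ K, ∀ ε > 0, ∀ᶠ i in l, ∃ x ∈ S i, dist y x < ε) :
    Tendsto (fun i => hausdorffDist (S i) K) l (𝓝 0) := by
  refine Metric.tendsto_nhds.mpr fun ε hε => ?_
  have hε4 : 0 < ε / 4 := by positivity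
  obtain ⟨T, hTK, hT, hKT⟩ := hK.finite_cover_balls hε4
  have hST : ∀ᶠ i in l, ∀ t ∈ T, ∃ x ∈ S i, dist t x < ε / 4 :=
    (eventually_all_finite hT).mpr fun t ht => hKS t (hTK ht) _ hε4
  filter_upwards [hSK (ε / 2) (half_pos hε), hST] with i hSi hTi
  have hle : hausdorffDist (S i) K ≤ ε / 2 := by
    refine hausdorffDist_le_of_mem_dist (half_pos hε).le
      (fun x hx => (hSi x hx).imp fun y hy => ⟨hy.1, hy.2.le⟩) fun y hy => ?_
    obtain ⟨t, ht, hyt⟩ := mem_iUnion₂.mp (hKT hy)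
    obtain ⟨x, hx, htx⟩ := hTi t ht
    exact ⟨x, hx, by linarith [dist_triangle y t x, mem_ball.mp hyt]⟩
  rw [Real.dist_0_eq_abs, abs_of_nonneg hausdorffDist_nonneg]
  linarith

lemma abs_le_norm_of_mem_spectrum {A : Type*} [CStarAlgebra A] {a : A} {t : ℝ}
    (ht : t ∈ spectrum ℝ a) : |t| ≤ ‖a‖ := by
  cases subsingleton_or_nontrivial A
  · simp [spectrum.of_subsingleton] at ht
  · exact spectrum.norm_le_norm_of_mem ht

lemma spectrum_subset_Icc_of_norm_le {A : Type*} [CStarAlgebra A] {a : A} {M : ℝ}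
    (h : ‖a‖ ≤ M) : spectrum ℝ a ⊆ Icc (-M) M :=
  fun _ ht => abs_le.mp ((abs_le_norm_of_mem_spectrum ht).trans h)

lemma IsState.abs_re_cfc_sub_re_aeval_le {E : Type*} [CStarAlgebra E] {φ : E →ₗ[ℂ] ℂ}
    (hφ : IsState φ) {x : E} (hx : IsSelfAdjoint x) {M : ℝ} (hxM : ‖x‖ ≤ M) {f : ℝ → ℝ}
    (hf : Continuous f) {p : ℝ[X]} {δ : ℝ} (hp : ∀ t ∈ Icc (-M) M, |p.eval t - f t| < δ) :
    |(φ (cfc f x)).re - (φ (aeval x p)).re| ≤ δ := by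
  rw [← cfc_polynomial p x hx]
  refine hφ.abs_re_cfc_sub_re_cfc_le hx hf p.continuous fun t ht => ?_
  rw [abs_sub_comm]
  exact (hp t (spectrum_subset_Icc_of_norm_le hxM ht)).le

section SpectralConvergence

variable {A : ℕ → Type*} [∀ n, CStarAlgebra (A n)] {B : Type*} [CStarAlgebra B]
  {φ : ∀ n, A n →ₗ[ℂ] ℂ} {ψ : B →ₗ[ℂ] ℂ} {a : ∀ n, A n} {b : B}

variable (φ ψ a b) in
def TendstoInDistribution : Prop :=
  ∀ q : ℝ[X], Tendsto (fun n => (φ n (aeval (a n) q)).re) atTop (𝓝 (ψ (aeval b q)).re)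

variable (φ a) in
/-- For `a n = P(X n)`, `m * K` bounds the degree of the *-polynomial `q(P) ^ m`. -/
def HasUniformRD (C D : ℝ) : Prop :=
  ∀ q : ℝ[X], ∃ K : ℕ, ∀ n m : ℕ, ‖aeval (a n) q ^ m‖ ≤
    C * ((m * K + 1 : ℕ) : ℝ) ^ D * √((φ n (aeval (a n) (q ^ (2 * m)))).re)

lemma TendstoInDistribution.exists_eventually_norm_le (h : TendstoInDistribution φ ψ a b)
    {C D : ℝ} (hRD : HasUniformRD φ a C D) (hC : 0 ≤ C) :
    ∃ M, ‖b‖ ≤ M ∧ ∀ᶠ n in atTop, ‖a n‖ ≤ M := by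
  obtain ⟨K, hK⟩ := hRD X
  set v := (ψ (aeval b (X ^ 2 : ℝ[X]))).re
  set R := C * ((K + 1 : ℕ) : ℝ) ^ D
  refine ⟨max (R * √(v + 1)) ‖b‖, le_max_right _ _, ?_⟩
  filter_upwards [(h (X ^ 2)).eventually (eventually_lt_nhds (lt_add_one v))] with n hn
  calc ‖a n‖ ≤ R * √((φ n (aeval (a n) (X ^ 2 : ℝ[X]))).re) := by
        simpa [R] using hK n 1
    _ ≤ R * √(v + 1) := by gcongr
    _ ≤ _ := le_max_left _ _

lemma TendstoInDistribution.tendsto_re_cfc (h : TendstoInDistribution φ ψ a b)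
    (hφ : ∀ n, IsState (φ n)) (hψ : IsState ψ) (ha : ∀ n, IsSelfAdjoint (a n))
    (hb : IsSelfAdjoint b) {M : ℝ} (hbM : ‖b‖ ≤ M) (haM : ∀ᶠ n in atTop, ‖a n‖ ≤ M)
    {f : ℝ → ℝ} (hf : Continuous f) :
    Tendsto (fun n => (φ n (cfc f (a n))).re) atTop (𝓝 (ψ (cfc f b)).re) := by
  refine Metric.tendsto_nhds.mpr fun ε hε => ?_
  have hε3 : 0 < ε / 3 := by positivity
  obtain ⟨p, hp⟩ := exists_polynomial_near_of_continuousOn (-M) M f hf.continuousOn _ hε3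
  filter_upwards [Metric.tendsto_nhds.mp (h p) _ hε3, haM] with n hn hnM
  have h1 := (hφ n).abs_re_cfc_sub_re_aeval_le (ha n) hnM hf hp
  have h2 := hψ.abs_re_cfc_sub_re_aeval_le hb hbM hf hp
  rw [Real.dist_eq, abs_lt] at hn ⊢
  rw [abs_le] at h1 h2
  constructor <;> linarith

lemma eventually_exists_mem_spectrum_dist_lt (hψ : IsState ψ) (hψf : IsFaithful ψ)
    (hb : IsSelfAdjoint b)
    (hweak : ∀ f : ℝ → ℝ, Continuous f →
      Tendsto (fun n => (φ n (cfc f (a n))).re) atTop (𝓝 (ψ (cfc f b)).re))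
    {t : ℝ} (ht : t ∈ spectrum ℝ b) {ε : ℝ} (hε : 0 < ε) :
    ∀ᶠ n in atTop, ∃ s ∈ spectrum ℝ (a n), dist t s < ε := by
  set h : ℝ → ℝ := fun s => max (ε - dist s t) 0
  have hh : Continuous h := by fun_prop
  have hbump : cfc h b ≠ 0 := fun h0 => by
    have := eqOn_of_cfc_eq_cfc (h0.trans (cfc_zero ℝ b).symm) hh.continuousOn
      continuousOn_const hb ht
    simp [h] at this
    linarith
  have hpos : 0 < (ψ (cfc (fun s => h s * h s) b)).re := by
    have hsa : IsSelfAdjoint (cfc h b) := cfc_predicate _ b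
    have hsq : cfc (fun s => h s * h s) b = star (cfc h b) * cfc h b := by
      rw [hsa.star_eq, cfc_mul h h b hh.continuousOn hh.continuousOn]
    rw [hsq]
    exact hψ.re_pos_of_isFaithful hψf hbump
  filter_upwards [(hweak (fun s => h s * h s) (hh.mul hh)).eventually (eventually_gt_nhds hpos)]
    with n hn
  by_contra! hfar
  have hzero : cfc (fun s => h s * h s) (a n) = 0 := by
    rw [cfc_congr (g := 0) fun s hs => ?_, cfc_zero]
    simp [h, dist_comm s t, hfar s hs]
  rw [hzero, map_zero, Complex.zero_re] at hn
  exact hn.false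

lemma TendstoInDistribution.eventually_norm_aeval_le (h : TendstoInDistribution φ ψ a b)
    {C D : ℝ} (hRD : HasUniformRD φ a C D) (hC : 0 ≤ C) (hψ : IsState ψ)
    (ha : ∀ n, IsSelfAdjoint (a n)) (hb : IsSelfAdjoint b) {q : ℝ[X]} {r : ℝ} (hr : 0 < r)
    (hq : ∀ t ∈ spectrum ℝ b, |q.eval t| ≤ r) :
    ∀ᶠ n in atTop, ‖aeval (a n) q‖ ≤ 2 * r := by
  obtain ⟨K, hK⟩ := hRD q
  -- `m` is a power of two so that the C*-identity gives `‖c ^ m‖ = ‖c‖ ^ m` for self-adjoint `c`.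
  obtain ⟨j, hj⟩ := ((tendsto_pow_atTop_atTop_of_one_lt one_lt_two).eventually
    (eventually_mul_rpow_le_two_pow (2 * C) D K)).exists
  set m := 2 ^ j
  have hlim : (ψ (aeval b (q ^ (2 * m)))).re < (2 * r ^ m) ^ 2 := by
    have hle : (ψ (aeval b (q ^ (2 * m)))).re ≤ r ^ (2 * m) := by
      rw [← cfc_polynomial _ b hb]
      refine hψ.re_cfc_le hb (q ^ (2 * m)).continuous fun t ht => ?_
      rw [eval_pow, ← (even_two_mul m).pow_abs]
      exact pow_le_pow_left₀ (abs_nonneg _) (hq t ht) _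
    rw [mul_pow, ← pow_mul, mul_comm m 2]
    linarith [pow_pos hr (2 * m)]
  filter_upwards [(h (q ^ (2 * m))).eventually (eventually_lt_nhds hlim)] with n hn
  have hsqrt : √((φ n (aeval (a n) (q ^ (2 * m)))).re) ≤ 2 * r ^ m :=
    (Real.sqrt_le_sqrt hn.le).trans_eq (Real.sqrt_sq (by positivity))
  have hpow : ‖aeval (a n) q‖ ^ m ≤ (2 * r) ^ m :=
    calc ‖aeval (a n) q‖ ^ m = ‖aeval (a n) q ^ m‖ := (((ha n).aeval q).norm_pow_two_pow j).symm
      _ ≤ C * ((m * K + 1 : ℕ) : ℝ) ^ D * √((φ n (aeval (a n) (q ^ (2 * m)))).re) := hK n m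
      _ ≤ C * ((m * K + 1 : ℕ) : ℝ) ^ D * (2 * r ^ m) := by gcongr
      _ = 2 * C * ((m * K + 1 : ℕ) : ℝ) ^ D * r ^ m := by ring
      _ ≤ 2 ^ m * r ^ m := by gcongr
      _ = (2 * r) ^ m := (mul_pow ..).symm
  exact le_of_pow_le_pow_left₀ (by positivity) (by positivity) hpow

lemma TendstoInDistribution.eventually_forall_mem_spectrum_exists_dist_lt
    (h : TendstoInDistribution φ ψ a b) {C D : ℝ} (hRD : HasUniformRD φ a C D) (hC : 0 ≤ C)
    (hψ : IsState ψ) (ha : ∀ n, IsSelfAdjoint (a n)) (hb : IsSelfAdjoint b) {M : ℝ}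
    (hbM : ‖b‖ ≤ M) (haM : ∀ᶠ n in atTop, ‖a n‖ ≤ M) {ε : ℝ} (hε : 0 < ε) :
    ∀ᶠ n in atTop, ∀ s ∈ spectrum ℝ (a n), ∃ t ∈ spectrum ℝ b, dist s t < ε := by
  have hne : (spectrum ℝ b).Nonempty :=
    haveI := hψ.nontrivial
    ContinuousFunctionalCalculus.spectrum_nonempty b hb
  set f : ℝ → ℝ := fun s => min (infDist s (spectrum ℝ b) / ε) 1
  have hf : Continuous f := ((continuous_infDist_pt _).div_const ε).min continuous_const
  obtain ⟨q, hq⟩ := exists_polynomial_near_of_continuousOn (-M) M f hf.continuousOn (1 / 4)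
    (by norm_num)
  have hqb : ∀ t ∈ spectrum ℝ b, |q.eval t| ≤ 1 / 4 := fun t ht => by
    simpa [f, infDist_zero_of_mem ht] using (hq t (spectrum_subset_Icc_of_norm_le hbM ht)).le
  filter_upwards [h.eventually_norm_aeval_le hRD hC hψ ha hb (by norm_num) hqb, haM]
    with n hn hnM s hs
  refine (infDist_lt_iff hne).mp (not_le.mp fun hfar => ?_)
  have hfs : f s = 1 := min_eq_right ((le_div_iff₀ hε).mpr (by linarith))
  have hqs := hq s (spectrum_subset_Icc_of_norm_le hnM hs)
  have hnorm := abs_le_norm_of_mem_spectrum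
    (spectrum.subset_polynomial_aeval (a n) q ⟨s, hs, rfl⟩)
  rw [hfs, abs_lt] at hqs
  rw [abs_le] at hnorm
  linarith

theorem TendstoInDistribution.tendsto_hausdorffDist_spectrum
    (h : TendstoInDistribution φ ψ a b) {C D : ℝ} (hRD : HasUniformRD φ a C D) (hC : 0 ≤ C)
    (hφ : ∀ n, IsState (φ n)) (hψ : IsState ψ) (hψf : IsFaithful ψ)
    (ha : ∀ n, IsSelfAdjoint (a n)) (hb : IsSelfAdjoint b) :
    Tendsto (fun n => hausdorffDist (spectrum ℝ (a n)) (spectrum ℝ b)) atTop (𝓝 0) := by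
  obtain ⟨M, hbM, haM⟩ := h.exists_eventually_norm_le hRD hC
  exact tendsto_hausdorffDist_zero (spectrum.isCompact b)
    (fun ε hε => h.eventually_forall_mem_spectrum_exists_dist_lt hRD hC hψ ha hb hbM haM hε)
    fun t ht ε hε => eventually_exists_mem_spectrum_dist_lt hψ hψf hb
      (fun f hf => h.tendsto_re_cfc hφ hψ ha hb hbM haM hf) ht hε

end SpectralConvergence

theorem spectra_hausdorff_convergence_of_uniformRD_general
    (d : ℕ)
    (A : ℕ → Type*) [∀ n, CStarAlgebra (A n)]
    (B : Type*) [CStarAlgebra B]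
    (φ : ∀ n, A n →ₗ[ℂ] ℂ) (ψ : B →ₗ[ℂ] ℂ)
    (hφ : ∀ n, IsState (φ n))
    (hψ : IsState ψ) (hψf : IsFaithful ψ)
    (X : ∀ n, Fin d → A n) (Y : Fin d → B)
    (hRD : ∃ C D : ℝ, 0 < C ∧ 0 < D ∧ ∀ n : ℕ, ∀ P : List (Fin d × Bool) →₀ ℂ,
      ‖evalPoly P (X n)‖ ≤
        C * ((degPoly P : ℝ) + 1) ^ D *
          Real.sqrt ((φ n (star (evalPoly P (X n)) * evalPoly P (X n))).re))
    (hconv : ∀ P : List (Fin d × Bool) →₀ ℂ,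
      Tendsto (fun n => φ n (evalPoly P (X n))) atTop (nhds (ψ (evalPoly P Y)))) :
    ∀ P : List (Fin d × Bool) →₀ ℂ, IsSelfAdjointPoly P →
      Tendsto
        (fun n => Metric.hausdorffDist (spectrum ℝ (evalPoly P (X n))) (spectrum ℝ (evalPoly P Y)))
        atTop (nhds 0) := by
  intro P hP
  obtain ⟨C, D, hC, hD, hRD⟩ := hRD
  have hdist : TendstoInDistribution φ ψ (fun n => evalPoly P (X n)) (evalPoly P Y) := fun q => by
    have h := hconv (aeval (.ofCoeff P : MonoidAlgebra ℂ (FreeMonoid (Fin d × Bool))) q).coeff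
    simpa only [evalPoly_coeff_aeval, Function.comp_def] using
      (Complex.continuous_re.tendsto _).comp h
  exact hdist.tendsto_hausdorffDist_spectrum
    (fun q => ⟨_, fun n => norm_aeval_evalPoly_pow_le hC.le hD.le (hRD n)
      (isSelfAdjoint_evalPoly (X n) hP) q⟩)
    hC.le hφ hψ hψf (fun n => isSelfAdjoint_evalPoly (X n) hP) (isSelfAdjoint_evalPoly Y hP)

/-- Uniform RD property together with convergence in non-commutative *-distribution implies
convergence in Hausdorff distance of the spectra of self-adjoint polynomials. -/
theorem spectra_hausdorff_convergence_of_uniformRD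
    (d : ℕ) (hd : 1 ≤ d)
    (A : ℕ → Type*) [∀ n, CStarAlgebra (A n)]
    (B : Type*) [CStarAlgebra B]
    (φ : ∀ n, A n →ₗ[ℂ] ℂ) (ψ : B →ₗ[ℂ] ℂ)
    (hφ : ∀ n, IsState (φ n)) (hφf : ∀ n, IsFaithful (φ n))
    (hψ : IsState ψ) (hψf : IsFaithful ψ)
    (X : ∀ n, Fin d → A n) (Y : Fin d → B)
    (hRD : ∃ C D : ℝ, 0 < C ∧ 0 < D ∧ ∀ n : ℕ, ∀ P : List (Fin d × Bool) →₀ ℂ,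
      ‖evalPoly P (X n)‖ ≤
        C * ((degPoly P : ℝ) + 1) ^ D *
          Real.sqrt ((φ n (star (evalPoly P (X n)) * evalPoly P (X n))).re))
    (hconv : ∀ P : List (Fin d × Bool) →₀ ℂ,
      Tendsto (fun n => φ n (evalPoly P (X n))) atTop (nhds (ψ (evalPoly P Y)))) :
    ∀ P : List (Fin d × Bool) →₀ ℂ, IsSelfAdjointPoly P →
      Tendsto
        (fun n => Metric.hausdorffDist (spectrum ℝ (evalPoly P (X n))) (spectrum ℝ (evalPoly P Y)))
        atTop (nhds 0) :=
  spectra_hausdorff_convergence_of_uniformRD_general d A B φ ψ hφ hψ hψf X Y hRD hconv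
end

section
/- For each n ∈ ℕ let A_n be a unital C*-algebra with a state φ_n and let x_n ∈ A_n; let A be a unital C*-algebra with a state φ and let x ∈ A. Assume: (a) for every k ∈ ℕ, φ_n((x_n* x_n)^k) → φ((x* x)^k) as n → ∞; (b) there exist constants C > 0 and D ≥ 0 such that for every n ∈ ℕ and every k ≥ 1, ‖x_n‖^{2k} ≤ C · k^D · (φ_n((x_n* x_n)^{2k}))^{1/2}. Then limsup_{n→∞} ‖x_n‖ ≤ ‖x‖. -/
/-! For each `k ≥ 1`, taking `2k`-th roots in the RD bound and passing to the limit in `n` gives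
`limsup ‖x n‖ ≤ (C k^D)^(1/2k) · ψ((y⋆y)^{2k})^(1/4k) ≤ (C k^D)^(1/2k) · ‖y‖`, because a state is
bounded by the norm on positive elements. The prefactor tends to `1` as `k → ∞`. -/

open Filter ComplexOrder

open Topology

namespace IsState

variable {A : Type*} [CStarAlgebra A] [PartialOrder A] [StarOrderedRing A] {ψ : A →ₗ[ℂ] ℂ}

lemma map_nonneg (hψ : IsState ψ) {a : A} (ha : 0 ≤ a) : 0 ≤ ψ a := by
  rw [StarOrderedRing.nonneg_iff] at ha
  induction ha using AddSubmonoid.closure_induction with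
  | mem _ h => obtain ⟨s, rfl⟩ := h; exact hψ.2 s
  | zero => simp
  | add _ _ _ _ h₁ h₂ => simpa using add_nonneg h₁ h₂

noncomputable def toPositiveLinearMap (hψ : IsState ψ) : A →ₚ[ℂ] ℂ :=
  .mk₀ ψ fun _ => hψ.map_nonneg

lemma re_apply_le_norm (hψ : IsState ψ) {a : A} (ha : 0 ≤ a) : (ψ a).re ≤ ‖a‖ :=
  calc (ψ a).re ≤ ‖ψ a‖ := Complex.re_le_norm _
    _ ≤ ‖ψ 1‖ * ‖a‖ := hψ.toPositiveLinearMap.norm_apply_le_of_nonneg a ha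
    _ = ‖a‖ := by simp [hψ.1]

lemma re_apply_star_mul_self_pow_le (hψ : IsState ψ) (y : A) (k : ℕ) :
    (ψ ((star y * y) ^ k)).re ≤ ‖y‖ ^ (2 * k) := by
  rcases Nat.eq_zero_or_pos k with rfl | hk
  · simp [hψ.1]
  calc (ψ ((star y * y) ^ k)).re ≤ ‖(star y * y) ^ k‖ :=
        hψ.re_apply_le_norm (CStarAlgebra.pow_nonneg (star_mul_self_nonneg y) k)
    _ ≤ ‖star y * y‖ ^ k := norm_pow_le' _ hk
    _ = ‖y‖ ^ (2 * k) := by rw [CStarRing.norm_star_mul_self, ← sq, pow_mul]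

end IsState

lemma tendsto_const_mul_natCast_rpow_rpow_inv_atTop {C b : ℝ} (hC : 0 < C) (hb : 0 < b) (D : ℝ) :
    Tendsto (fun k : ℕ => (C * (k : ℝ) ^ D) ^ (b * k)⁻¹) atTop (𝓝 1) := by
  have hexp : Tendsto (fun k : ℕ => (b * k)⁻¹) atTop (𝓝 0) :=
    tendsto_inv_atTop_zero.comp (tendsto_natCast_atTop_atTop.const_mul_atTop hb)
  have hC' : Tendsto (fun k : ℕ => C ^ (b * k)⁻¹) atTop (𝓝 1) := by
    simpa using tendsto_const_nhds.rpow hexp (Or.inl hC.ne')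
  have hk : Tendsto (fun k : ℕ => (k : ℝ) ^ (D / (b * k + 0))) atTop (𝓝 1) :=
    (tendsto_rpow_div_mul_add D b 0 hb.ne).comp tendsto_natCast_atTop_atTop
  refine (one_mul (1 : ℝ) ▸ hC'.mul hk).congr fun k => ?_
  rw [Real.mul_rpow hC.le (by positivity), ← Real.rpow_mul k.cast_nonneg, add_zero, div_eq_mul_inv]

lemma limsup_le_rpow_inv_of_pow_le {ι : Type*} {l : Filter ι} [l.NeBot] {a s : ι → ℝ} {t : ℝ}
    {m : ℕ} (hm : m ≠ 0) (ha : ∀ i, 0 ≤ a i) (hle : ∀ i, a i ^ m ≤ s i)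
    (hs : Tendsto s l (𝓝 t)) : limsup a l ≤ t ^ (m⁻¹ : ℝ) := by
  have hroot : Tendsto (fun i => s i ^ (m⁻¹ : ℝ)) l (𝓝 (t ^ (m⁻¹ : ℝ))) :=
    (Real.continuousAt_rpow_const _ _ (Or.inr (by positivity))).tendsto.comp hs
  rw [← hroot.limsup_eq]
  refine limsup_le_limsup (.of_forall fun i => ?_) (isBoundedUnder_of ⟨0, ha⟩).isCoboundedUnder_le
    hroot.isBoundedUnder_le
  rw [← Real.pow_rpow_inv_natCast (ha i) hm]
  exact Real.rpow_le_rpow (pow_nonneg (ha i) m) (hle i) (by positivity)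

theorem limsup_norm_le_of_moment_convergence_and_RD_bound_general
    (A : ℕ → Type*) [∀ n, CStarAlgebra (A n)]
    (B : Type*) [CStarAlgebra B]
    (φ : ∀ n, A n →ₗ[ℂ] ℂ) (ψ : B →ₗ[ℂ] ℂ)
    (hψ : IsState ψ)
    (x : ∀ n, A n) (y : B)
    (hconv : ∀ k : ℕ,
      Tendsto (fun n => φ n ((star (x n) * x n) ^ k)) atTop
        (nhds (ψ ((star y * y) ^ k))))
    (hRD : ∃ C D : ℝ, 0 < C ∧ 0 ≤ D ∧ ∀ n : ℕ, ∀ k : ℕ, 1 ≤ k →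
      ‖x n‖ ^ (2 * k) ≤
        C * (k : ℝ) ^ D * Real.sqrt ((φ n ((star (x n) * x n) ^ (2 * k))).re)) :
    limsup (fun n => ‖x n‖) atTop ≤ ‖y‖ := by
  let _ : PartialOrder B := CStarAlgebra.spectralOrder B
  have : StarOrderedRing B := CStarAlgebra.spectralOrderedRing B
  obtain ⟨C, D, hC, -, hRD⟩ := hRD
  have hbound (k : ℕ) (hk : 1 ≤ k) :
      limsup (fun n => ‖x n‖) atTop ≤ (C * (k : ℝ) ^ D) ^ (2 * (k : ℝ))⁻¹ * ‖y‖ := by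
    have hmoment := (((Complex.continuous_re.tendsto _).comp (hconv (2 * k))).sqrt).const_mul
      (C * (k : ℝ) ^ D)
    have hy : √(ψ ((star y * y) ^ (2 * k))).re ≤ ‖y‖ ^ (2 * k) :=
      Real.sqrt_le_iff.mpr ⟨by positivity, by
        rw [← pow_mul, mul_comm (2 * k)]; exact hψ.re_apply_star_mul_self_pow_le y (2 * k)⟩
    calc limsup (fun n => ‖x n‖) atTop
        ≤ (C * (k : ℝ) ^ D * √(ψ ((star y * y) ^ (2 * k))).re) ^ (((2 * k : ℕ) : ℝ)⁻¹) :=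
          limsup_le_rpow_inv_of_pow_le (by omega) (fun n => norm_nonneg _) (hRD · k hk) hmoment
      _ ≤ (C * (k : ℝ) ^ D * ‖y‖ ^ (2 * k)) ^ (((2 * k : ℕ) : ℝ)⁻¹) := by gcongr
      _ = (C * (k : ℝ) ^ D) ^ (2 * (k : ℝ))⁻¹ * ‖y‖ := by
          rw [Real.mul_rpow (by positivity) (by positivity),
            Real.pow_rpow_inv_natCast (norm_nonneg y) (by omega)]
          push_cast; rfl
  have hfactor := (tendsto_const_mul_natCast_rpow_rpow_inv_atTop hC two_pos D).mul_const ‖y‖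
  rw [one_mul] at hfactor
  exact ge_of_tendsto hfactor ((eventually_ge_atTop 1).mono hbound)

/-- Convergence of moments together with a uniform RD-type bound for the elements `x_n`
implies `limsup ‖x_n‖ ≤ ‖x‖`. -/
theorem limsup_norm_le_of_moment_convergence_and_RD_bound
    (A : ℕ → Type*) [∀ n, CStarAlgebra (A n)]
    (B : Type*) [CStarAlgebra B]
    (φ : ∀ n, A n →ₗ[ℂ] ℂ) (ψ : B →ₗ[ℂ] ℂ)
    (hφ : ∀ n, IsState (φ n)) (hψ : IsState ψ)
    (x : ∀ n, A n) (y : B)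
    (hconv : ∀ k : ℕ,
      Tendsto (fun n => φ n ((star (x n) * x n) ^ k)) atTop
        (nhds (ψ ((star y * y) ^ k))))
    (hRD : ∃ C D : ℝ, 0 < C ∧ 0 ≤ D ∧ ∀ n : ℕ, ∀ k : ℕ, 1 ≤ k →
      ‖x n‖ ^ (2 * k) ≤
        C * (k : ℝ) ^ D * Real.sqrt ((φ n ((star (x n) * x n) ^ (2 * k))).re)) :
    limsup (fun n => ‖x n‖) atTop ≤ ‖y‖ :=
  limsup_norm_le_of_moment_convergence_and_RD_bound_general A B φ ψ hψ x y hconv hRD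
end
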